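/- arXiv:2306.13057 — 6 statements merged into one kernel-verified Lean document; each statement's English description precedes it below -/
import Mathlib

section
/- Let m, t be positive integers with m ≥ 30000 and t ≤ √m/16000, and let N = m^{13t}. If x_1, …, x_N are drawn i.i.d. from N(0, I_m), then with probability at least 0.8 the following hold simultaneously: (a) 0.9·√m ≤ ‖x_i‖₂ ≤ 1.1·√m for every i ∈ [N]; (b) ‖x_i − x_j‖₂ ≥ √m for every pair of distinct indices i ≠ j in [N]. -/
open MeasureTheory Matrix

/-- Squared Euclidean norm of a vector in `ℝ^m`. -/
noncomputable def sqNorm {m : ℕ} (x : Fin m → ℝ) : ℝ := ∑ i, (x i)^2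

/-- Euclidean (ℓ₂) norm of a vector in `ℝ^m`. -/
noncomputable def enorm2 {m : ℕ} (x : Fin m → ℝ) : ℝ := Real.sqrt (sqNorm x)

/-- Density of the Gaussian `N(μ, δ·I_m)` on `ℝ^m`. -/
noncomputable def gaussDensity {m : ℕ} (μ : Fin m → ℝ) (δ : ℝ) (x : Fin m → ℝ) : ℝ :=
  (2 * Real.pi * δ) ^ (-(m:ℝ)/2) * Real.exp (-(sqNorm (x - μ)) / (2*δ))

/-- Density of the standard Gaussian `N(0, I_m)` on `ℝ^m`. -/
noncomputable def stdGaussDensity (m : ℕ) : (Fin m → ℝ) → ℝ := gaussDensity 0 1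

/-- The Gaussian measure `N(μ, δ·I_m)` on `ℝ^m`. -/
noncomputable def gaussMeasure {m : ℕ} (μ : Fin m → ℝ) (δ : ℝ) : Measure (Fin m → ℝ) :=
  volume.withDensity fun x => ENNReal.ofReal (gaussDensity μ δ x)

/-- The standard Gaussian measure `N(0, I_m)` on `ℝ^m`. -/
noncomputable def stdGauss (m : ℕ) : Measure (Fin m → ℝ) := gaussMeasure 0 1

/-!
Union bound over the `2N` norm events and the `N²` pair events, each controlled by a Chernoff
bound. Completing the square coordinatewise gives, for `a > -1/2` and `x ~ N(0, I_m)`,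
`E exp(-a‖x - u‖²) = (1 + 2a)^(-m/2) exp(-a‖u‖²/(1 + 2a))`; with `u = 0` this is the moment
generating function of `‖x‖²`, and integrating once more over `u ~ N(0, I_m)` gives
`E exp(-a‖x - y‖²) = (1 + 4a)^(-m/2)` for independent `x, y`. Using only `log b ≥ 1 - 1/b`, the
choices `a = -1/20, 1/16, 1/8` bound the three tail probabilities by `e^(-m/250)`, `e^(-m/250)`
and `e^(-m/25)`, while `N ≤ e^(13m/8000)` because `log m ≤ 2√m` and `t ≤ √m/16000`.
-/

open Real Set ProbabilityTheory
open scoped ENNReal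

section SqNorm

variable {m : ℕ}

lemma sqNorm_nonneg (x : Fin m → ℝ) : 0 ≤ sqNorm x :=
  Finset.sum_nonneg fun _ _ => sq_nonneg _

@[fun_prop]
lemma measurable_sqNorm : Measurable (sqNorm : (Fin m → ℝ) → ℝ) := by
  unfold sqNorm
  fun_prop

lemma mul_sqrt_eq_sqrt_sq_mul {c : ℝ} (hc : 0 ≤ c) (r : ℝ) : c * √r = √(c ^ 2 * r) := by
  rw [sqrt_mul (sq_nonneg c), sqrt_sq hc]

lemma sqNorm_le_of_enorm2_lt {r : ℝ} {x : Fin m → ℝ} (h : enorm2 x < √r) : sqNorm x ≤ r :=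
  ((sqrt_lt_sqrt_iff (sqNorm_nonneg x)).1 h).le

lemma le_sqNorm_of_sqrt_lt_enorm2 {r : ℝ} {x : Fin m → ℝ} (h : √r < enorm2 x) : r ≤ sqNorm x :=
  ((sqrt_lt_sqrt_iff_of_pos (sqrt_pos.1 ((sqrt_nonneg r).trans_lt h))).1 h).le

lemma compl_setOf_enorm2_subset {ι : Type*} (r₁ r₂ r₃ : ℝ) :
    {x : ι → Fin m → ℝ | (∀ i, √r₁ ≤ enorm2 (x i) ∧ enorm2 (x i) ≤ √r₂) ∧
        ∀ i j, i ≠ j → √r₃ ≤ enorm2 (x i - x j)}ᶜ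
      ⊆ (⋃ i, {x | sqNorm (x i) ≤ r₁}) ∪ (⋃ i, {x | r₂ ≤ sqNorm (x i)})
        ∪ ⋃ i, ⋃ j, {x | i ≠ j ∧ sqNorm (x i - x j) ≤ r₃} := by
  intro x hx
  simp only [mem_compl_iff, mem_ofPred_eq, not_and_or, not_forall, not_le, exists_prop] at hx
  simp only [mem_union, mem_iUnion, mem_ofPred_eq]
  rcases hx with ⟨i, hi | hi⟩ | ⟨i, j, hij, hi⟩
  · exact .inl (.inl ⟨i, sqNorm_le_of_enorm2_lt hi⟩)
  · exact .inl (.inr ⟨i, le_sqNorm_of_sqrt_lt_enorm2 hi⟩)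
  · exact .inr ⟨i, j, hij, sqNorm_le_of_enorm2_lt hi⟩

end SqNorm

section GaussianIntegrals

lemma rpow_neg_div_two_eq_inv_sqrt_pow {a : ℝ} (ha : 0 ≤ a) (m : ℕ) :
    a ^ (-(m : ℝ) / 2) = (√a)⁻¹ ^ m := by
  rw [sqrt_eq_rpow, ← rpow_neg ha, ← rpow_mul_natCast ha]
  ring_nf

lemma gaussDensity_zero_one {m : ℕ} (x : Fin m → ℝ) :
    gaussDensity 0 1 x = ∏ i, (√(2 * π))⁻¹ * exp (-(x i) ^ 2 / 2) := by
  rw [gaussDensity, Finset.prod_mul_distrib, ← exp_sum, Finset.prod_const, Finset.card_fin,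
    mul_one, ← rpow_neg_div_two_eq_inv_sqrt_pow (by positivity), sub_zero, sqNorm,
    ← Finset.sum_div, ← Finset.sum_neg_distrib, mul_one]

lemma exp_neg_sq_half_mul_exp_neg_mul_sq_sub {a : ℝ} (ha : 1 + 2 * a ≠ 0) (c y : ℝ) :
    exp (-y ^ 2 / 2) * exp (-a * (y - c) ^ 2)
      = exp (-(a / (1 + 2 * a)) * c ^ 2)
        * exp (-((1 + 2 * a) / 2) * (y - 2 * a * c / (1 + 2 * a)) ^ 2) := by
  rw [← exp_add, ← exp_add]
  congr 1
  field_simp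
  ring

lemma integrable_gaussian_mul_exp_neg_mul_sq_sub {a : ℝ} (ha : -1 / 2 < a) (c : ℝ) :
    Integrable fun y => (√(2 * π))⁻¹ * exp (-y ^ 2 / 2) * exp (-a * (y - c) ^ 2) := by
  simp_rw [mul_assoc, exp_neg_sq_half_mul_exp_neg_mul_sq_sub (by linarith : 1 + 2 * a ≠ 0)]
  exact (((integrable_exp_neg_mul_sq (by linarith)).comp_sub_right _).const_mul _).const_mul _

lemma integral_gaussian_mul_exp_neg_mul_sq_sub {a : ℝ} (ha : -1 / 2 < a) (c : ℝ) :
    ∫ y, (√(2 * π))⁻¹ * exp (-y ^ 2 / 2) * exp (-a * (y - c) ^ 2)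
      = (√(1 + 2 * a))⁻¹ * exp (-(a / (1 + 2 * a)) * c ^ 2) := by
  have hs : 0 < 1 + 2 * a := by linarith
  simp_rw [mul_assoc, exp_neg_sq_half_mul_exp_neg_mul_sq_sub hs.ne']
  rw [integral_const_mul, integral_const_mul,
    integral_sub_right_eq_self (fun y => exp (-((1 + 2 * a) / 2) * y ^ 2)), integral_gaussian,
    show π / ((1 + 2 * a) / 2) = 2 * π / (1 + 2 * a) by field_simp, sqrt_div (by positivity)]
  field_simp

lemma lintegral_ofReal_prod {ι : Type*} [Fintype ι] (f : ι → ℝ → ℝ)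
    (hf : ∀ i, Integrable (f i)) (hf_nonneg : ∀ i y, 0 ≤ f i y) :
    ∫⁻ x : ι → ℝ, ENNReal.ofReal (∏ i, f i (x i)) = ENNReal.ofReal (∏ i, ∫ y, f i y) := by
  rw [← integral_fintype_prod_eq_prod, ofReal_integral_eq_lintegral_ofReal
    (Integrable.fintype_prod hf) (ae_of_all _ fun x => Finset.prod_nonneg fun i _ => hf_nonneg i _),
    volume_pi]

variable {m : ℕ}

@[fun_prop]
lemma measurable_gaussDensity (μ : Fin m → ℝ) (δ : ℝ) : Measurable (gaussDensity μ δ) := by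
  unfold gaussDensity
  fun_prop

lemma lintegral_stdGauss_exp_neg_mul_sqNorm_sub {a : ℝ} (ha : -1 / 2 < a) (u : Fin m → ℝ) :
    ∫⁻ x, ENNReal.ofReal (exp (-a * sqNorm (x - u))) ∂stdGauss m
      = ENNReal.ofReal ((1 + 2 * a) ^ (-(m : ℝ) / 2) * exp (-(a / (1 + 2 * a)) * sqNorm u)) := by
  have hprod : ∀ x : Fin m → ℝ,
      ENNReal.ofReal (gaussDensity 0 1 x) * ENNReal.ofReal (exp (-a * sqNorm (x - u)))
        = ENNReal.ofReal (∏ i, (√(2 * π))⁻¹ * exp (-(x i) ^ 2 / 2)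
            * exp (-a * (x i - u i) ^ 2)) := by
    intro x
    rw [← ENNReal.ofReal_mul (by rw [gaussDensity_zero_one]; positivity), gaussDensity_zero_one,
      sqNorm, Finset.mul_sum, exp_sum, ← Finset.prod_mul_distrib]
    rfl
  rw [stdGauss, gaussMeasure, lintegral_withDensity_eq_lintegral_mul _ (by fun_prop) (by fun_prop)]
  simp only [Pi.mul_apply, hprod]
  rw [lintegral_ofReal_prod _ (fun i => integrable_gaussian_mul_exp_neg_mul_sq_sub ha (u i))
      (fun i y => by positivity)]
  simp_rw [integral_gaussian_mul_exp_neg_mul_sq_sub ha]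
  rw [Finset.prod_mul_distrib, Finset.prod_const, Finset.card_fin, ← exp_sum, ← Finset.mul_sum,
    rpow_neg_div_two_eq_inv_sqrt_pow (by linarith)]
  rfl

lemma lintegral_stdGauss_exp_neg_mul_sqNorm {a : ℝ} (ha : -1 / 2 < a) :
    ∫⁻ x, ENNReal.ofReal (exp (-a * sqNorm x)) ∂stdGauss m
      = ENNReal.ofReal ((1 + 2 * a) ^ (-(m : ℝ) / 2)) := by
  simpa [sqNorm] using lintegral_stdGauss_exp_neg_mul_sqNorm_sub ha 0

instance : IsProbabilityMeasure (stdGauss m) :=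
  ⟨by simpa using lintegral_stdGauss_exp_neg_mul_sqNorm (m := m) (a := 0) (by norm_num)⟩

lemma lintegral_prod_stdGauss_exp_neg_mul_sqNorm_sub {a : ℝ} (ha : -1 / 4 < a) :
    ∫⁻ p, ENNReal.ofReal (exp (-a * sqNorm (p.1 - p.2))) ∂(stdGauss m).prod (stdGauss m)
      = ENNReal.ofReal ((1 + 4 * a) ^ (-(m : ℝ) / 2)) := by
  have hs : 0 < 1 + 2 * a := by linarith
  have ha' : -1 / 2 < a / (1 + 2 * a) := by
    rw [lt_div_iff₀ hs]
    linarith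
  rw [lintegral_prod_symm _ (by fun_prop)]
  simp_rw [lintegral_stdGauss_exp_neg_mul_sqNorm_sub (by linarith : -1 / 2 < a),
    ENNReal.ofReal_mul (rpow_nonneg hs.le _)]
  rw [lintegral_const_mul _ (by fun_prop), lintegral_stdGauss_exp_neg_mul_sqNorm ha',
    ← ENNReal.ofReal_mul (rpow_nonneg hs.le _), ← mul_rpow hs.le (by linarith)]
  congr 2
  field_simp
  ring

end GaussianIntegrals

section Chernoff

lemma measure_ge_le_exp_mul_lintegral_exp {α : Type*} [MeasurableSpace α] (μ : Measure α)
    {f : α → ℝ} (hf : AEMeasurable f μ) (c : ℝ) :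
    μ {x | c ≤ f x} ≤ ENNReal.ofReal (exp (-c)) * ∫⁻ x, ENNReal.ofReal (exp (f x)) ∂μ := by
  have hset : {x | c ≤ f x} = {x | ENNReal.ofReal (exp c) ≤ ENNReal.ofReal (exp (f x))} := by
    ext x
    simp [ENNReal.ofReal_le_ofReal_iff (exp_nonneg _)]
  calc μ {x | c ≤ f x}
      = ENNReal.ofReal (exp (-c)) * (ENNReal.ofReal (exp c) * μ {x | c ≤ f x}) := by
        rw [← mul_assoc, ← ENNReal.ofReal_mul (exp_nonneg _), ← exp_add, neg_add_cancel, exp_zero,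
          ENNReal.ofReal_one, one_mul]
    _ ≤ _ := by
        grw [hset, mul_meas_ge_le_lintegral₀ (by fun_prop)]

lemma rpow_neg_le_exp_mul_inv_sub_one {b y : ℝ} (hb : 0 < b) (hy : 0 ≤ y) :
    b ^ (-y) ≤ exp (y * (b⁻¹ - 1)) := by
  rw [rpow_def_of_pos hb, exp_le_exp]
  nlinarith [one_sub_inv_le_log_of_pos hb]

variable {m : ℕ}

lemma stdGauss_neg_mul_sqNorm_ge_le {a : ℝ} (ha : -1 / 2 < a) (c : ℝ) :
    stdGauss m {x | c ≤ -a * sqNorm x}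
      ≤ ENNReal.ofReal (exp (-c + m / 2 * ((1 + 2 * a)⁻¹ - 1))) := by
  grw [measure_ge_le_exp_mul_lintegral_exp _ (by fun_prop) c,
    lintegral_stdGauss_exp_neg_mul_sqNorm ha, ← ENNReal.ofReal_mul (exp_nonneg _), neg_div,
    rpow_neg_le_exp_mul_inv_sub_one (by linarith) (by positivity), ← exp_add]

lemma prod_stdGauss_neg_mul_sqNorm_sub_ge_le {a : ℝ} (ha : -1 / 4 < a) (c : ℝ) :
    (stdGauss m).prod (stdGauss m) {p | c ≤ -a * sqNorm (p.1 - p.2)}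
      ≤ ENNReal.ofReal (exp (-c + m / 2 * ((1 + 4 * a)⁻¹ - 1))) := by
  grw [measure_ge_le_exp_mul_lintegral_exp _ (by fun_prop) c,
    lintegral_prod_stdGauss_exp_neg_mul_sqNorm_sub ha, ← ENNReal.ofReal_mul (exp_nonneg _),
    neg_div, rpow_neg_le_exp_mul_inv_sub_one (by linarith) (by positivity), ← exp_add]

lemma stdGauss_sqNorm_ge_le :
    stdGauss m {x | 1.21 * m ≤ sqNorm x} ≤ ENNReal.ofReal (exp (-(m / 250))) := by
  refine (measure_mono (ofPred_subset_ofPred.2 fun x hx => ?_)).trans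
    ((stdGauss_neg_mul_sqNorm_ge_le (a := -1 / 20) (by norm_num) (1.21 * m / 20)).trans ?_)
  · linarith
  · gcongr
    norm_num
    linarith [m.cast_nonneg (α := ℝ)]

lemma stdGauss_sqNorm_le_le :
    stdGauss m {x | sqNorm x ≤ 0.81 * m} ≤ ENNReal.ofReal (exp (-(m / 250))) := by
  refine (measure_mono (ofPred_subset_ofPred.2 fun x hx => ?_)).trans
    ((stdGauss_neg_mul_sqNorm_ge_le (a := 1 / 16) (by norm_num) (-(0.81 * m / 16))).trans ?_)
  · linarith
  · gcongr
    norm_num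
    linarith [m.cast_nonneg (α := ℝ)]

lemma prod_stdGauss_sqNorm_sub_le_le :
    (stdGauss m).prod (stdGauss m) {p | sqNorm (p.1 - p.2) ≤ m}
      ≤ ENNReal.ofReal (exp (-(m / 25))) := by
  refine (measure_mono (ofPred_subset_ofPred.2 fun x hx => ?_)).trans
    ((prod_stdGauss_neg_mul_sqNorm_sub_ge_le (a := 1 / 8) (by norm_num) (-(m / 8))).trans ?_)
  · linarith
  · gcongr
    norm_num
    linarith [m.cast_nonneg (α := ℝ)]

end Chernoff

section Samples

variable {ι α : Type*} [Fintype ι] [MeasurableSpace α]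

lemma measurePreserving_eval_prodMk (μ : Measure α) [IsProbabilityMeasure μ] {i j : ι}
    (hij : i ≠ j) :
    MeasurePreserving (fun x : ι → α => (x i, x j)) (Measure.pi fun _ => μ) (μ.prod μ) := by
  refine ⟨by fun_prop, ?_⟩
  rw [((iIndepFun_pi (X := fun _ a => a) fun _ => aemeasurable_id).indepFun hij
    |>.map_prod_eq_prod_map_map (measurable_pi_apply i).aemeasurable
      (measurable_pi_apply j).aemeasurable)]
  exact congr_arg₂ _ (measurePreserving_eval _ i).map_eq (measurePreserving_eval _ j).map_eq

lemma measure_iUnion_le_card_mul (μ : Measure α) {s : ι → Set α} {ε : ℝ}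
    (h : ∀ i, μ (s i) ≤ ENNReal.ofReal ε) :
    μ (⋃ i, s i) ≤ ENNReal.ofReal (Fintype.card ι * ε) :=
  calc μ (⋃ i, s i) ≤ ∑ i, μ (s i) := measure_iUnion_fintype_le μ s
    _ ≤ ∑ _i : ι, ENNReal.ofReal ε := Finset.sum_le_sum fun i _ => h i
    _ = ENNReal.ofReal (Fintype.card ι * ε) := by
      rw [Finset.sum_const, Finset.card_univ, nsmul_eq_mul, ENNReal.ofReal_mul (by positivity),
        ENNReal.ofReal_natCast]

lemma one_sub_le_measure_of_measure_compl_le (μ : Measure α) [IsProbabilityMeasure μ]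
    {s : Set α} {ε : ℝ≥0∞} (h : μ sᶜ ≤ ε) : 1 - ε ≤ μ s := by
  rw [tsub_le_iff_right, ← measure_univ (μ := μ)]
  grw [measure_univ_le_add_compl s, h]

variable {m : ℕ}

lemma pi_stdGauss_sqNorm_eval_ge_le (i : ι) :
    Measure.pi (fun _ : ι => stdGauss m) {x | 1.21 * m ≤ sqNorm (x i)}
      ≤ ENNReal.ofReal (exp (-(m / 250))) := by
  change Measure.pi (fun _ : ι => stdGauss m)
    (Function.eval i ⁻¹' {y : Fin m → ℝ | 1.21 * m ≤ sqNorm y}) ≤ _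
  rw [(measurePreserving_eval _ i).measure_preimage
      (measurableSet_le measurable_const measurable_sqNorm).nullMeasurableSet]
  exact stdGauss_sqNorm_ge_le

lemma pi_stdGauss_sqNorm_eval_le_le (i : ι) :
    Measure.pi (fun _ : ι => stdGauss m) {x | sqNorm (x i) ≤ 0.81 * m}
      ≤ ENNReal.ofReal (exp (-(m / 250))) := by
  change Measure.pi (fun _ : ι => stdGauss m)
    (Function.eval i ⁻¹' {y : Fin m → ℝ | sqNorm y ≤ 0.81 * m}) ≤ _
  rw [(measurePreserving_eval _ i).measure_preimage
      (measurableSet_le measurable_sqNorm measurable_const).nullMeasurableSet]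
  exact stdGauss_sqNorm_le_le

lemma pi_stdGauss_sqNorm_sub_eval_le_le (i j : ι) :
    Measure.pi (fun _ : ι => stdGauss m) {x | i ≠ j ∧ sqNorm (x i - x j) ≤ m}
      ≤ ENNReal.ofReal (exp (-(m / 25))) := by
  by_cases hij : i = j
  · simp [hij]
  refine (measure_mono fun x hx => hx.2).trans ?_
  exact ((measurePreserving_eval_prodMk _ hij).measure_preimage
    (measurableSet_le (by fun_prop) measurable_const).nullMeasurableSet).trans_le
    prod_stdGauss_sqNorm_sub_le_le

end Samples

section Numerics

lemma natCast_pow_le_exp {m t : ℕ} (hm : 0 < m) (ht : (t : ℝ) ≤ √m / 16000) :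
    ((m ^ (13 * t) : ℕ) : ℝ) ≤ exp (13 * m / 8000) := by
  have hm' : (0 : ℝ) < m := by exact_mod_cast hm
  have hlog : log m ≤ 2 * √m := by
    have := log_le_sub_one_of_pos (sqrt_pos.2 hm')
    rw [log_sqrt hm'.le] at this
    linarith
  calc ((m ^ (13 * t) : ℕ) : ℝ) = exp (13 * t * log m) := by
        rw [Nat.cast_pow, ← exp_log (pow_pos hm' _), log_pow]
        push_cast
        ring_nf
    _ ≤ exp (13 * (√m / 16000) * (2 * √m)) := by gcongr
    _ = exp (13 * m / 8000) := by
        rw [show 13 * (√m / 16000) * (2 * √m) = 13 * (√m * √m) / 8000 by ring,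
          mul_self_sqrt hm'.le]

lemma mul_exp_neg_le_of_le_exp {x c d : ℝ} (hx : x ≤ exp c) (hcd : c + 19 ≤ d) :
    x * exp (-d) ≤ 0.05 := by
  have h19 : exp (-19) ≤ 0.05 := by
    rw [exp_neg]
    have := add_one_le_exp 19
    rw [inv_le_comm₀ (exp_pos _) (by norm_num)]
    linarith
  calc x * exp (-d) ≤ exp c * exp (-d) := by gcongr
    _ ≤ exp (-19) := by rw [← exp_add]; gcongr; linarith
    _ ≤ 0.05 := h19

end Numerics

theorem stmt_3_general (m t : ℕ) (hm : 30000 ≤ m)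
    (ht : (t : ℝ) ≤ Real.sqrt m / 16000) :
    (Measure.pi fun _ : Fin (m^(13*t)) => stdGauss m)
      {x : Fin (m^(13*t)) → (Fin m → ℝ) |
        (∀ i, 0.9 * Real.sqrt m ≤ enorm2 (x i) ∧ enorm2 (x i) ≤ 1.1 * Real.sqrt m) ∧
        (∀ i j, i ≠ j → Real.sqrt m ≤ enorm2 (x i - x j))}
      ≥ ENNReal.ofReal 0.8 := by
  set N := m ^ (13 * t)
  have hm' : (30000 : ℝ) ≤ m := by exact_mod_cast hm
  have hN : (N : ℝ) ≤ exp (13 * m / 8000) := natCast_pow_le_exp (by omega) ht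
  have hN2 : (N : ℝ) * N ≤ exp (26 * m / 8000) :=
    calc (N : ℝ) * N ≤ exp (13 * m / 8000) * exp (13 * m / 8000) :=
          mul_le_mul hN hN (by positivity) (exp_nonneg _)
      _ = exp (26 * m / 8000) := by rw [← exp_add]; ring_nf
  have hlo := measure_iUnion_le_card_mul _ (pi_stdGauss_sqNorm_eval_le_le (ι := Fin N) (m := m))
  have hhi := measure_iUnion_le_card_mul _ (pi_stdGauss_sqNorm_eval_ge_le (ι := Fin N) (m := m))
  have hpair := measure_iUnion_le_card_mul _ fun i =>
    measure_iUnion_le_card_mul _ (pi_stdGauss_sqNorm_sub_eval_le_le (m := m) (i : Fin N))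
  simp only [Fintype.card_fin, ← mul_assoc] at hlo hhi hpair
  rw [mul_sqrt_eq_sqrt_sq_mul (by norm_num : (0 : ℝ) ≤ 0.9),
    mul_sqrt_eq_sqrt_sq_mul (by norm_num : (0 : ℝ) ≤ 1.1), show (0.9 : ℝ) ^ 2 = 0.81 by norm_num,
    show (1.1 : ℝ) ^ 2 = 1.21 by norm_num]
  calc ENNReal.ofReal 0.8 = 1 - ENNReal.ofReal 0.2 := by
        rw [← ENNReal.ofReal_one, ← ENNReal.ofReal_sub _ (by norm_num)]
        norm_num
    _ ≤ _ := one_sub_le_measure_of_measure_compl_le _ <|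
        (measure_mono (compl_setOf_enorm2_subset _ _ _)).trans <| by
          grw [measure_union_le, measure_union_le, hlo, hhi, hpair,
            mul_exp_neg_le_of_le_exp hN (by linarith), mul_exp_neg_le_of_le_exp hN2 (by linarith),
            ← ENNReal.ofReal_add (by norm_num) (by norm_num),
            ← ENNReal.ofReal_add (by norm_num) (by norm_num)]
          norm_num

/-- norm concentration and pairwise separation of Gaussian samples.
Let `m, t` be positive integers with `m ≥ 30000` and `t ≤ √m/16000`, and let
`N = m^(13t)`. With probability at least `0.8` over `N` i.i.d. samples from
`N(0, I_m)`: (a) `0.9·√m ≤ ‖x_i‖₂ ≤ 1.1·√m` for every `i`; and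
(b) `‖x_i − x_j‖₂ ≥ √m` for all `i ≠ j`. -/
theorem stmt_3 (m t : ℕ) (ht0 : 0 < t) (hm : 30000 ≤ m)
    (ht : (t : ℝ) ≤ Real.sqrt m / 16000) :
    (Measure.pi fun _ : Fin (m^(13*t)) => stdGauss m)
      {x : Fin (m^(13*t)) → (Fin m → ℝ) |
        (∀ i, 0.9 * Real.sqrt m ≤ enorm2 (x i) ∧ enorm2 (x i) ≤ 1.1 * Real.sqrt m) ∧
        (∀ i j, i ≠ j → Real.sqrt m ≤ enorm2 (x i - x j))}
      ≥ ENNReal.ofReal 0.8 :=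
  stmt_3_general m t hm ht
end

section
/- Let m be a positive integer, η ∈ [0,1], and let M be a real m×m matrix with operator norm ‖M‖_op ≤ 1 and Frobenius norm satisfying ‖M‖_F² ≥ m − η. Then every singular value of M is at least √(1 − η), and consequently |det M| ≥ (1 − η)^{m/2}. -/
open Matrix

/-- Operator (spectral) norm of a square real matrix, via its action on Euclidean space. -/
noncomputable def opNorm {m : ℕ} (M : Matrix (Fin m) (Fin m) ℝ) : ℝ :=
  ‖Matrix.toEuclideanCLM (𝕜 := ℝ) M‖

/-- Frobenius norm of a real matrix. -/
noncomputable def frobNorm {m n : ℕ} (M : Matrix (Fin m) (Fin n) ℝ) : ℝ :=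
  Real.sqrt (∑ i, ∑ j, (M i j)^2)

/-!
The eigenvalues `λᵢ` of `M Mᵀ` (the squared singular values of `M`) satisfy `λᵢ ≤ ‖M‖_op² ≤ 1`,
and their sum is `tr (M Mᵀ) = ‖M‖_F² ≥ m − η`. Hence the deficits `1 − λᵢ` are nonnegative with
sum at most `η`, so each of them is at most `η`. Finally `det M ² = det (M Mᵀ) = ∏ λᵢ ≥ (1 − η)ᵐ`.
-/

theorem Finset.one_sub_le_of_card_sub_le_sum {ι : Type*} [Fintype ι] {f : ι → ℝ} {η : ℝ}
    (hf : ∀ i, f i ≤ 1) (hsum : (Fintype.card ι : ℝ) - η ≤ ∑ i, f i) (j : ι) :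
    1 - η ≤ f j := by
  have hdeficit : ∑ i, (1 - f i) ≤ η := by
    rw [Finset.sum_sub_distrib, Finset.sum_const, Finset.card_univ, nsmul_one]
    linarith
  have := Finset.single_le_sum (fun i _ => sub_nonneg.2 (hf i)) (Finset.mem_univ j)
  linarith

theorem Real.rpow_half_le_abs_of_pow_le_sq {a x : ℝ} {m : ℕ} (ha : 0 ≤ a) (h : a ^ m ≤ x ^ 2) :
    a ^ ((m : ℝ) / 2) ≤ |x| := by
  rw [div_eq_mul_one_div, Real.rpow_mul ha, Real.rpow_natCast, ← Real.sqrt_eq_rpow,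
    ← Real.sqrt_sq_eq_abs]
  exact Real.sqrt_le_sqrt h

namespace Matrix

theorem isHermitian_mul_transpose_self {m n : Type*} [Fintype n] (M : Matrix m n ℝ) :
    (M * Mᵀ).IsHermitian := by
  simpa only [conjTranspose_eq_transpose_of_trivial] using isHermitian_mul_conjTranspose_self M

variable {n : Type*} [Fintype n] [DecidableEq n]

theorem le_norm_toEuclideanCLM_of_mem_spectrum {A : Matrix n n ℝ} {r : ℝ}
    (hr : r ∈ spectrum ℝ A) : r ≤ ‖toEuclideanCLM (𝕜 := ℝ) A‖ := by
  rw [← AlgEquiv.spectrum_eq (toEuclideanCLM (𝕜 := ℝ) (n := n)) A] at hr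
  have := spectrum.subset_closedBall_norm_mul (toEuclideanCLM (𝕜 := ℝ) A) hr
  rw [Metric.mem_closedBall, dist_zero_right, Real.norm_eq_abs] at this
  calc r ≤ |r| := le_abs_self r
    _ ≤ _ := this
    _ ≤ ‖toEuclideanCLM (𝕜 := ℝ) A‖ :=
      mul_le_of_le_one_right (norm_nonneg _) ContinuousLinearMap.norm_id_le

theorem norm_toEuclideanCLM_mul_transpose_self (M : Matrix n n ℝ) :
    ‖toEuclideanCLM (𝕜 := ℝ) (M * Mᵀ)‖ = ‖toEuclideanCLM (𝕜 := ℝ) M‖ ^ 2 := by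
  rw [← conjTranspose_eq_transpose_of_trivial, ← star_eq_conjTranspose, map_mul, map_star, sq]
  exact CStarRing.norm_self_mul_star

end Matrix

theorem frobNorm_sq_eq_trace {m n : ℕ} (M : Matrix (Fin m) (Fin n) ℝ) :
    frobNorm M ^ 2 = (M * Mᵀ).trace := by
  rw [frobNorm, Real.sq_sqrt (by positivity)]
  simp [Matrix.trace, Matrix.mul_apply, sq]

theorem stmt_4_general (m : ℕ) (η : ℝ) (hη1 : η ≤ 1)
    (M : Matrix (Fin m) (Fin m) ℝ)
    (hop : opNorm M ≤ 1) (hF : frobNorm M ^ 2 ≥ (m : ℝ) - η) :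
    (∀ lam ∈ spectrum ℝ (M * Mᵀ), Real.sqrt (1 - η) ≤ Real.sqrt lam) ∧
    (1 - η) ^ ((m : ℝ)/2) ≤ |M.det| := by
  have hA := isHermitian_mul_transpose_self M
  have hle_one : ∀ i, hA.eigenvalues i ≤ 1 := fun i => calc
    hA.eigenvalues i ≤ ‖toEuclideanCLM (𝕜 := ℝ) (M * Mᵀ)‖ :=
      le_norm_toEuclideanCLM_of_mem_spectrum (hA.eigenvalues_mem_spectrum_real i)
    _ = opNorm M ^ 2 := norm_toEuclideanCLM_mul_transpose_self M
    _ ≤ 1 := pow_le_one₀ (norm_nonneg _) hop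
  have hsum : (Fintype.card (Fin m) : ℝ) - η ≤ ∑ i, hA.eigenvalues i := by
    have htrace : (M * Mᵀ).trace = ∑ i, hA.eigenvalues i := by
      simpa using hA.trace_eq_sum_eigenvalues
    rw [Fintype.card_fin, ← htrace, ← frobNorm_sq_eq_trace]
    exact hF
  have hge := Finset.one_sub_le_of_card_sub_le_sum hle_one hsum
  refine ⟨fun lam hlam => ?_, Real.rpow_half_le_abs_of_pow_le_sq (by linarith) ?_⟩
  · obtain ⟨i, rfl⟩ := hA.spectrum_real_eq_range_eigenvalues ▸ hlam
    exact Real.sqrt_le_sqrt (hge i)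
  · calc (1 - η) ^ m = ∏ _i : Fin m, (1 - η) := by simp
      _ ≤ ∏ i, hA.eigenvalues i := Finset.prod_le_prod (fun _ _ => by linarith) fun i _ => hge i
      _ = M.det ^ 2 := by
        have hdet : (M * Mᵀ).det = ∏ i, hA.eigenvalues i := by
          simpa using hA.det_eq_prod_eigenvalues
        rw [← hdet, det_mul, det_transpose, sq]

/-- singular values and determinant from norm constraints.
Let `M` be a real `m×m` matrix with `‖M‖_op ≤ 1` and `‖M‖_F² ≥ m − η` for some
`η ∈ [0,1]`. Then every singular value of `M` (i.e. the square root of any eigenvalue of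
`M Mᵀ`) is at least `√(1 − η)`, and consequently `|det M| ≥ (1 − η)^(m/2)`. -/
theorem stmt_4 (m : ℕ) (hm : 0 < m) (η : ℝ) (hη0 : 0 ≤ η) (hη1 : η ≤ 1)
    (M : Matrix (Fin m) (Fin m) ℝ)
    (hop : opNorm M ≤ 1) (hF : frobNorm M ^ 2 ≥ (m : ℝ) - η) :
    (∀ lam ∈ spectrum ℝ (M * Mᵀ), Real.sqrt (1 - η) ≤ Real.sqrt lam) ∧
    (1 - η) ^ ((m : ℝ)/2) ≤ |M.det| :=
  stmt_4_general m η hη1 M hop hF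
end

section
/- There exist absolute constants C > 0 and c ∈ (0,1) such that for every positive integer m, every δ ∈ (0, c), and every pair of vectors μ, μ' ∈ ℝ^m the following holds: letting p and q denote the densities of N(μ, δ·I_m) and N(μ', δ·I_m) respectively, the double integral ∬_{ℝ^m × ℝ^m} min{p(x), q(x')} dx dx' is at most C^m · δ^{m/2} · (log(1/δ))^m, and in particular at most C^m · δ^{0.4·m}. -/
open MeasureTheory Matrix

/-!
Since `min a b ≤ √a * √b`, the double integral is at most `(∫ √p) (∫ √q)`. Up to a constant,
`√p` is the density of `N(μ, 2δ·I_m)`; coordinatewise this gives `∫ √p = (8πδ)^(m/4)`, so the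
integral is at most `(8πδ)^(m/2) ≤ 6^m δ^(m/2)`. Both bounds follow for `δ < e⁻¹`, where
`log (1/δ) ≥ 1` and `δ^(m/2) ≤ δ^(0.4 m)`.
-/

open Real ProbabilityTheory

lemma min_le_sqrt_mul_sqrt {a b : ℝ} (ha : 0 ≤ a) (hb : 0 ≤ b) : min a b ≤ √a * √b := by
  rcases le_total a b with h | h
  · calc min a b = √a * √a := by rw [min_eq_left h, mul_self_sqrt ha]
      _ ≤ √a * √b := by gcongr
  · calc min a b = √b * √b := by rw [min_eq_right h, mul_self_sqrt hb]
      _ ≤ √a * √b := by gcongr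

lemma integral_min_le_integral_sqrt_mul_integral_sqrt {α β : Type*} [MeasurableSpace α] [MeasurableSpace β]
    {μ : Measure α} {ν : Measure β} [SFinite μ] [SFinite ν] {f : α → ℝ} {g : β → ℝ}
    (hf : 0 ≤ f) (hg : 0 ≤ g) (hf' : Integrable (fun x ↦ √(f x)) μ)
    (hg' : Integrable (fun y ↦ √(g y)) ν) :
    ∫ z, min (f z.1) (g z.2) ∂μ.prod ν ≤ (∫ x, √(f x) ∂μ) * ∫ y, √(g y) ∂ν := by
  rw [← integral_prod_mul]
  exact integral_mono_of_nonneg (ae_of_all _ fun z ↦ le_min (hf _) (hg _)) (hf'.mul_prod hg')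
    (ae_of_all _ fun z ↦ min_le_sqrt_mul_sqrt (hf _) (hg _))

lemma sqrt_gaussianPDFReal (a : ℝ) (v : NNReal) (t : ℝ) :
    √(gaussianPDFReal a v t) = √(√(2 * π * v))⁻¹ * exp (-(t - a) ^ 2 / (4 * v)) := by
  rw [gaussianPDFReal, sqrt_mul (by positivity)]
  congr 1
  rw [sqrt_eq_iff_mul_self_eq_of_pos (exp_pos _), ← exp_add]
  ring_nf

lemma integrable_sqrt_gaussianPDFReal (a : ℝ) {v : NNReal} (hv : v ≠ 0) :
    Integrable fun t ↦ √(gaussianPDFReal a v t) := by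
  simp_rw [sqrt_gaussianPDFReal]
  refine Integrable.const_mul ?_ _
  have hb : 0 < 1 / (4 * (v : ℝ)) := by positivity
  convert (integrable_exp_neg_mul_sq hb).comp_sub_right a using 3 with t
  ring

lemma integral_sqrt_gaussianPDFReal (a : ℝ) (v : NNReal) :
    ∫ t, √(gaussianPDFReal a v t) = √√(8 * π * v) := by
  simp_rw [sqrt_gaussianPDFReal]
  rw [integral_const_mul, integral_sub_right_eq_self (fun t ↦ exp (-t ^ 2 / (4 * v))) a]
  have h := integral_gaussian (1 / (4 * v))
  simp only [neg_mul, one_div_mul_eq_div, div_div_eq_mul_div, div_one] at h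
  simp only [neg_div] at h ⊢
  rw [h, ← sqrt_mul (by positivity)]
  congr 1
  set w := √(2 * π * v)
  have hw : 2 * π * v = w ^ 2 := (sq_sqrt (by positivity)).symm
  rw [show 8 * π * v = (2 * w) ^ 2 by linear_combination 4 * hw, sqrt_sq (by positivity),
    show π * (4 * v) = 2 * w ^ 2 by linear_combination 2 * hw]
  rcases eq_or_ne w 0 with h0 | h0
  · simp [h0]
  · field_simp

lemma gaussDensity_nonneg {m : ℕ} (μ : Fin m → ℝ) {δ : ℝ} (hδ : 0 ≤ δ) :
    0 ≤ gaussDensity μ δ := fun x ↦ by unfold gaussDensity; positivity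

lemma gaussDensity_eq_prod {m : ℕ} (μ : Fin m → ℝ) {δ : ℝ} (hδ : 0 ≤ δ) (x : Fin m → ℝ) :
    gaussDensity μ δ x = ∏ i, gaussianPDFReal (μ i) δ.toNNReal (x i) := by
  simp only [gaussDensity, gaussianPDFReal, Finset.prod_mul_distrib, ← exp_sum,
    Real.coe_toNNReal _ hδ, Finset.prod_const, Finset.card_univ, Fintype.card_fin]
  congr 1
  · rw [sqrt_eq_rpow, ← rpow_neg (by positivity), ← rpow_natCast, ← rpow_mul (by positivity)]
    ring_nf
  · simp only [sqNorm, Pi.sub_apply, neg_div, Finset.sum_div, Finset.sum_neg_distrib]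

lemma integrable_sqrt_gaussDensity {m : ℕ} (μ : Fin m → ℝ) {δ : ℝ} (hδ : 0 < δ) :
    Integrable fun x ↦ √(gaussDensity μ δ x) := by
  simp_rw [gaussDensity_eq_prod μ hδ.le,
    sqrt_prod _ fun i _ ↦ gaussianPDFReal_nonneg _ _ _]
  exact Integrable.fintype_prod (f := fun i t ↦ √(gaussianPDFReal (μ i) δ.toNNReal t))
    fun i ↦ integrable_sqrt_gaussianPDFReal _ (by simpa using hδ)

lemma integral_sqrt_gaussDensity {m : ℕ} (μ : Fin m → ℝ) {δ : ℝ} (hδ : 0 ≤ δ) :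
    ∫ x, √(gaussDensity μ δ x) = √√(8 * π * δ) ^ m := by
  simp_rw [gaussDensity_eq_prod μ hδ,
    sqrt_prod _ fun i _ ↦ gaussianPDFReal_nonneg _ _ _]
  rw [integral_fintype_prod_volume_eq_prod (fun i t ↦ √(gaussianPDFReal (μ i) δ.toNNReal t))]
  simp [integral_sqrt_gaussianPDFReal, Real.coe_toNNReal _ hδ]

lemma integral_min_gaussDensity_le {m : ℕ} (μ μ' : Fin m → ℝ) {δ : ℝ} (hδ : 0 < δ) :
    ∫ z : (Fin m → ℝ) × (Fin m → ℝ), min (gaussDensity μ δ z.1) (gaussDensity μ' δ z.2)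
      ≤ √(8 * π * δ) ^ m := by
  rw [Measure.volume_eq_prod]
  refine (integral_min_le_integral_sqrt_mul_integral_sqrt (gaussDensity_nonneg μ hδ.le)
    (gaussDensity_nonneg μ' hδ.le) (integrable_sqrt_gaussDensity μ hδ)
    (integrable_sqrt_gaussDensity μ' hδ)).trans_eq ?_
  rw [integral_sqrt_gaussDensity μ hδ.le, integral_sqrt_gaussDensity μ' hδ.le, ← mul_pow,
    mul_self_sqrt (sqrt_nonneg _)]

lemma sqrt_eight_pi_mul_le (δ : ℝ) : √(8 * π * δ) ≤ 6 * √δ := by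
  rw [sqrt_mul (by positivity)]
  gcongr
  rw [sqrt_le_left (by norm_num)]
  linarith [pi_lt_d2]

/-- Claim: the double integral of the min of two narrow Gaussian
densities is small. There are absolute constants `C > 0` and `c ∈ (0,1)` such that for
every positive integer `m`, every `δ ∈ (0, c)` and all means `μ, μ' ∈ ℝ^m`, the double
integral `∬ min{p(x), q(x')} dx dx'` of the densities `p, q` of `N(μ, δ·I_m)` and
`N(μ', δ·I_m)` is at most `C^m·δ^(m/2)·(log(1/δ))^m`, and in particular at most
`C^m·δ^(0.4·m)`. -/
theorem stmt_5 :
    ∃ C c : ℝ, 0 < C ∧ 0 < c ∧ c < 1 ∧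
      ∀ (m : ℕ), 0 < m → ∀ δ : ℝ, 0 < δ → δ < c → ∀ μ μ' : Fin m → ℝ,
        (∫ z : (Fin m → ℝ) × (Fin m → ℝ),
            min (gaussDensity μ δ z.1) (gaussDensity μ' δ z.2))
          ≤ C^m * δ^((m : ℝ)/2) * (Real.log (1/δ))^m ∧
        (∫ z : (Fin m → ℝ) × (Fin m → ℝ),
            min (gaussDensity μ δ z.1) (gaussDensity μ' δ z.2))
          ≤ C^m * δ^(0.4 * (m : ℝ)) := by
  have hc : exp (-1) < 1 := exp_lt_one_iff.mpr (by norm_num)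
  refine ⟨6, exp (-1), by norm_num, exp_pos _, hc, ?_⟩
  intro m _ δ hδ hδc μ μ'
  have hbound : ∫ z : (Fin m → ℝ) × (Fin m → ℝ),
      min (gaussDensity μ δ z.1) (gaussDensity μ' δ z.2) ≤ 6 ^ m * δ ^ ((m : ℝ) / 2) :=
    calc _ ≤ √(8 * π * δ) ^ m := integral_min_gaussDensity_le μ μ' hδ
      _ ≤ (6 * √δ) ^ m := by gcongr; exact sqrt_eight_pi_mul_le δ
      _ = 6 ^ m * δ ^ ((m : ℝ) / 2) := by
        rw [mul_pow, sqrt_eq_rpow, ← rpow_natCast (δ ^ (1 / 2 : ℝ)), ← rpow_mul hδ.le]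
        ring_nf
  have hlog : 1 ≤ log (1 / δ) := by
    rw [one_div, log_inv]
    linarith [(log_lt_iff_lt_exp hδ).mpr hδc]
  refine ⟨hbound.trans (le_mul_of_one_le_right (by positivity) (one_le_pow₀ hlog)),
    hbound.trans ?_⟩
  gcongr 6 ^ m * ?_
  exact rpow_le_rpow_of_exponent_ge hδ (hδc.trans hc).le
    (by linarith [(Nat.cast_nonneg m : (0 : ℝ) ≤ m)])
end

section
/- Let m ≤ d be positive integers, let A be a probability density on ℝ^m, and let V ∈ ℝ^{m×d} satisfy V Vᵀ = I_m. Define P_{A,V}(x) = A(Vx)·φ_d(x)/φ_m(Vx) for x ∈ ℝ^d. Then P_{A,V} is a probability density on ℝ^d, and ∫_{ℝ^d} min{P_{A,V}(x), φ_d(x)} dx = ∫_{ℝ^m} min{A(y), φ_m(y)} dy; consequently d_TV(P_{A,V}, N(0, I_d)) = d_TV(A, N(0, I_m)). -/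
/-! Extend the rows of `V` to an orthonormal basis of `ℝ^d`. In the coordinates `x = (y, z)` of
that basis, with `y = Vx`, Lebesgue measure is preserved and `φ_d(x) = φ_m(y) φ_{d-m}(z)`, so
`P_{A,V}(x) = A(y) φ_{d-m}(z)`. Both `min` and `|· - ·|` are positively homogeneous, hence
integrating `min (P_{A,V}) φ_d` or `|P_{A,V} - φ_d|` over `z` leaves the corresponding integral
of `A` against `φ_m`. -/

open MeasureTheory Matrix

/-- Density of `P_{A,V}` on `ℝ^d`: agrees with `A` along the row span of `V` and is
standard Gaussian on the orthogonal complement. -/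
noncomputable def embedDensity {m d : ℕ} (A : (Fin m → ℝ) → ℝ)
    (V : Matrix (Fin m) (Fin d) ℝ) (x : Fin d → ℝ) : ℝ :=
  A (V.mulVec x) * stdGaussDensity d x / stdGaussDensity m (V.mulVec x)

open Real ProbabilityTheory

lemma Matrix.mulVec_apply_eq_inner_toLp {ι n : Type*} [Fintype n] (V : Matrix ι n ℝ)
    (x : n → ℝ) (i : ι) :
    (V *ᵥ x) i = inner ℝ (WithLp.toLp 2 (V i)) (WithLp.toLp 2 x) := by
  simp [mulVec, dotProduct, PiLp.inner_apply, mul_comm]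

lemma Matrix.orthonormal_toLp_rows_of_mul_transpose_eq_one {ι n : Type*} [Fintype n]
    [DecidableEq ι] {V : Matrix ι n ℝ} (hV : V * Vᵀ = 1) :
    Orthonormal ℝ fun i => WithLp.toLp 2 (V i) := by
  rw [orthonormal_iff_ite]
  intro i j
  simpa [PiLp.inner_apply, Matrix.mul_apply, Matrix.one_apply, mul_comm] using
    congrFun (congrFun hV i) j

section RowExtension

variable {ι κ n : Type*} [Fintype ι] [Fintype κ] [Fintype n] [DecidableEq ι]

lemma Matrix.exists_orthonormalBasis_inl_eq_toLp_rows
    (hcard : Fintype.card ι + Fintype.card κ = Fintype.card n)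
    {V : Matrix ι n ℝ} (hV : V * Vᵀ = 1) :
    ∃ b : OrthonormalBasis (ι ⊕ κ) ℝ (EuclideanSpace ℝ n),
      ∀ i, b (Sum.inl i) = WithLp.toLp 2 (V i) := by
  set w : ι ⊕ κ → EuclideanSpace ℝ n := Sum.elim (fun i => WithLp.toLp 2 (V i)) 0
  have hw : (Set.range Sum.inl).domRestrict w
      = (fun i => WithLp.toLp 2 (V i)) ∘ (Equiv.ofInjective _ Sum.inl_injective).symm := by
    ext ⟨_, i, rfl⟩ : 1
    simp [w]
  obtain ⟨b, hb⟩ := Orthonormal.exists_orthonormalBasis_extension_of_card_eq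
    (by simp [finrank_euclideanSpace, hcard])
    (hw ▸ (orthonormal_toLp_rows_of_mul_transpose_eq_one hV).comp _ (Equiv.injective _))
  exact ⟨b, fun i => hb _ ⟨i, rfl⟩⟩

lemma Matrix.exists_measurePreserving_mulVec_eq_fst
    (hcard : Fintype.card ι + Fintype.card κ = Fintype.card n)
    {V : Matrix ι n ℝ} (hV : V * Vᵀ = 1) :
    ∃ T : (ι → ℝ) × (κ → ℝ) ≃ᵐ (n → ℝ), MeasurePreserving T ∧
      ∀ p, V *ᵥ T p = p.1 ∧ ∑ j, T p j ^ 2 = ∑ i, p.1 i ^ 2 + ∑ k, p.2 k ^ 2 := by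
  obtain ⟨b, hb⟩ := exists_orthonormalBasis_inl_eq_toLp_rows hcard hV
  let S := (MeasurableEquiv.sumPiEquivProdPi fun _ : ι ⊕ κ => ℝ).symm.trans
    (MeasurableEquiv.toLp 2 _)
  refine ⟨S.trans <| b.measurableEquiv.symm.trans (MeasurableEquiv.toLp 2 _).symm, ?_,
    fun p => ⟨?_, ?_⟩⟩
  · exact (PiLp.volume_preserving_ofLp n).comp <| b.measurePreserving_measurableEquiv.symm.comp <|
      (PiLp.volume_preserving_toLp _).comp (volume_measurePreserving_sumPiEquivProdPi_symm _)
  · ext i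
    rw [mulVec_apply_eq_inner_toLp, ← hb i, ← b.repr_apply_apply]
    exact congrFun (congrArg WithLp.ofLp (b.repr.apply_symm_apply (S p))) (Sum.inl i)
  · calc ∑ j, (b.repr.symm (S p)) j ^ 2 = ‖b.repr.symm (S p)‖ ^ 2 :=
          (EuclideanSpace.real_norm_sq_eq _).symm
      _ = ‖S p‖ ^ 2 := by rw [LinearIsometryEquiv.norm_map]
      _ = ∑ i, p.1 i ^ 2 + ∑ k, p.2 k ^ 2 := by
        rw [EuclideanSpace.real_norm_sq_eq, Fintype.sum_sum_type]
        rfl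

end RowExtension

lemma stdGaussDensity_eq (m : ℕ) (x : Fin m → ℝ) :
    stdGaussDensity m x = (2 * π) ^ (-(m : ℝ) / 2) * exp (-sqNorm x / 2) := by
  simp [stdGaussDensity, gaussDensity]

lemma stdGaussDensity_pos (m : ℕ) (x : Fin m → ℝ) : 0 < stdGaussDensity m x := by
  rw [stdGaussDensity_eq]
  positivity

lemma stdGaussDensity_eq_prod (m : ℕ) (x : Fin m → ℝ) :
    stdGaussDensity m x = ∏ i, gaussianPDFReal 0 1 (x i) := by
  have hconst : (2 * π) ^ (-(m : ℝ) / 2) = (√(2 * π))⁻¹ ^ m := by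
    rw [sqrt_eq_rpow, ← rpow_neg (by positivity), ← rpow_mul_natCast (by positivity)]
    ring_nf
  rw [stdGaussDensity_eq, hconst]
  simp only [gaussianPDFReal, Finset.prod_mul_distrib, Finset.prod_const, Finset.card_univ,
    Fintype.card_fin, ← exp_sum, sqNorm, neg_div, Finset.sum_div, Finset.sum_neg_distrib]
  norm_num

lemma integral_stdGaussDensity (m : ℕ) : ∫ x, stdGaussDensity m x = 1 := by
  simp_rw [stdGaussDensity_eq_prod]
  rw [integral_fintype_prod_volume_eq_pow, integral_gaussianPDFReal_eq_one 0 one_ne_zero, one_pow]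

lemma stdGaussDensity_eq_mul_of_sqNorm_eq {m k d : ℕ} (hd : m + k = d) {x : Fin d → ℝ}
    {y : Fin m → ℝ} {z : Fin k → ℝ} (hx : sqNorm x = sqNorm y + sqNorm z) :
    stdGaussDensity d x = stdGaussDensity m y * stdGaussDensity k z := by
  subst hd
  simp only [stdGaussDensity_eq, hx, Nat.cast_add, neg_add, add_div]
  rw [rpow_add (by positivity), exp_add]
  ring

noncomputable def gaussRatio {m d : ℕ} (V : Matrix (Fin m) (Fin d) ℝ) (x : Fin d → ℝ) : ℝ :=
  stdGaussDensity d x / stdGaussDensity m (V *ᵥ x)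

section GaussRatio

variable {m d : ℕ} (V : Matrix (Fin m) (Fin d) ℝ)

lemma gaussRatio_nonneg (x : Fin d → ℝ) : 0 ≤ gaussRatio V x :=
  div_nonneg (stdGaussDensity_pos d x).le (stdGaussDensity_pos m _).le

lemma stdGaussDensity_eq_mul_gaussRatio (x : Fin d → ℝ) :
    stdGaussDensity d x = stdGaussDensity m (V *ᵥ x) * gaussRatio V x :=
  (mul_div_cancel₀ _ (stdGaussDensity_pos m _).ne').symm

lemma embedDensity_eq_mul_gaussRatio (A : (Fin m → ℝ) → ℝ) (x : Fin d → ℝ) :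
    embedDensity A V x = A (V *ᵥ x) * gaussRatio V x :=
  mul_div_assoc _ _ _

end GaussRatio

theorem integral_comp_mulVec_mul_gaussRatio (hmd : m ≤ d) {V : Matrix (Fin m) (Fin d) ℝ}
    (hV : V * Vᵀ = 1) (g : (Fin m → ℝ) → ℝ) :
    ∫ x, g (V *ᵥ x) * gaussRatio V x = ∫ y, g y := by
  obtain ⟨T, hT, hTV⟩ := exists_measurePreserving_mulVec_eq_fst (κ := Fin (d - m))
    (by simp [hmd]) hV
  have hratio (p : (Fin m → ℝ) × (Fin (d - m) → ℝ)) :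
      gaussRatio V (T p) = stdGaussDensity (d - m) p.2 := by
    rw [gaussRatio, (hTV p).1, stdGaussDensity_eq_mul_of_sqNorm_eq (Nat.add_sub_cancel' hmd)
      (hTV p).2, mul_div_cancel_left₀ _ (stdGaussDensity_pos _ _).ne']
  calc ∫ x, g (V *ᵥ x) * gaussRatio V x
      = ∫ p : (Fin m → ℝ) × (Fin (d - m) → ℝ), g p.1 * stdGaussDensity (d - m) p.2 := by
        rw [← hT.integral_comp' fun x => g (V *ᵥ x) * gaussRatio V x]
        simp only [(hTV _).1, hratio]
    _ = ∫ y, g y := by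
        rw [Measure.volume_eq_prod, integral_prod_mul, integral_stdGaussDensity, mul_one]

theorem stmt_7_general (m d : ℕ) (hmd : m ≤ d)
    (A : (Fin m → ℝ) → ℝ) (hA1 : ∫ y, A y = 1)
    (V : Matrix (Fin m) (Fin d) ℝ) (hV : V * Vᵀ = 1) :
    (∫ x, embedDensity A V x = 1) ∧
    (∫ x, min (embedDensity A V x) (stdGaussDensity d x)
        = ∫ y, min (A y) (stdGaussDensity m y)) ∧
    ((1/2) * ∫ x, |embedDensity A V x - stdGaussDensity d x|
        = (1/2) * ∫ y, |A y - stdGaussDensity m y|) := by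
  have hr := gaussRatio_nonneg V
  simp only [embedDensity_eq_mul_gaussRatio, stdGaussDensity_eq_mul_gaussRatio V]
  refine ⟨by rw [integral_comp_mulVec_mul_gaussRatio hmd hV A, hA1], ?_, ?_⟩
  · simp only [← min_mul_of_nonneg _ _ (hr _)]
    exact integral_comp_mulVec_mul_gaussRatio hmd hV fun y => min (A y) (stdGaussDensity m y)
  · simp only [← sub_mul, abs_mul, abs_of_nonneg (hr _)]
    rw [integral_comp_mulVec_mul_gaussRatio hmd hV fun y => |A y - stdGaussDensity m y|]

/-- hidden-subspace embedding preserves total variation distance to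
the Gaussian. Let `m ≤ d`, let `A` be a probability density on `ℝ^m`, and let
`V ∈ ℝ^{m×d}` satisfy `V Vᵀ = I_m`. Then `P_{A,V}(x) = A(Vx)·φ_d(x)/φ_m(Vx)` is a
probability density on `ℝ^d`, the integral of `min{P_{A,V}, φ_d}` equals that of
`min{A, φ_m}`, and consequently `d_TV(P_{A,V}, N(0,I_d)) = d_TV(A, N(0,I_m))`. -/
theorem stmt_7 (m d : ℕ) (hm : 0 < m) (hmd : m ≤ d)
    (A : (Fin m → ℝ) → ℝ) (hAmeas : Measurable A)
    (hA0 : ∀ y, 0 ≤ A y) (hA1 : ∫ y, A y = 1)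
    (V : Matrix (Fin m) (Fin d) ℝ) (hV : V * Vᵀ = 1) :
    (∫ x, embedDensity A V x = 1) ∧
    (∫ x, min (embedDensity A V x) (stdGaussDensity d x)
        = ∫ y, min (A y) (stdGaussDensity m y)) ∧
    ((1/2) * ∫ x, |embedDensity A V x - stdGaussDensity d x|
        = (1/2) * ∫ y, |A y - stdGaussDensity m y|) :=
  stmt_7_general m d hmd A hA1 V hV
end

section
/- Let m be a positive integer, δ ∈ (0, 2), and μ ∈ ℝ^m. Then 1 + χ²(N(μ, δ·I_m), N(0, I_m)) = (δ(2 − δ))^{−m/2} · exp(‖μ‖₂²/(2 − δ)). -/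
/-!
Completing the square, the integrand `gaussDensity μ δ x ^ 2 / stdGaussDensity m x` is again a
Gaussian: up to the constant `(2πδ²)^(-m/2) · exp(‖μ‖² / (2 - δ))` it is
`exp(-(2 - δ)/(2δ) · ‖x - 2μ/(2 - δ)‖²)`, which factorises over the coordinates into one-dimensional Gaussian integrals, each equal to `√(2πδ / (2 - δ))`.
-/

open MeasureTheory Matrix

open Real

lemma integral_exp_neg_mul_sq_sub (a c : ℝ) :
    ∫ t : ℝ, exp (-a * (t - c) ^ 2) = √(π / a) :=
  (integral_sub_right_eq_self (fun s => exp (-a * s ^ 2)) c).trans (integral_gaussian a)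

lemma integral_exp_neg_mul_sqNorm_sub {m : ℕ} {a : ℝ} (ha : 0 ≤ a) (c : Fin m → ℝ) :
    ∫ x, exp (-a * sqNorm (x - c)) = (π / a) ^ ((m : ℝ) / 2) := by
  have hprod : ∀ x : Fin m → ℝ, exp (-a * sqNorm (x - c)) = ∏ i, exp (-a * (x i - c i) ^ 2) := by
    intro x
    simp only [sqNorm, Finset.mul_sum, exp_sum, Pi.sub_apply]
  simp_rw [hprod]
  rw [integral_fintype_prod_volume_eq_prod (f := fun i t => exp (-a * (t - c i) ^ 2))]
  simp_rw [integral_exp_neg_mul_sq_sub]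
  rw [Finset.prod_const, Finset.card_univ, Fintype.card_fin, sqrt_eq_rpow,
    ← rpow_mul_natCast (by positivity)]
  ring_nf

lemma neg_sqNorm_sub_div_add_sqNorm_div_two {m : ℕ} (μ x : Fin m → ℝ) {δ : ℝ} (hδ : δ ≠ 0)
    (h2δ : 2 - δ ≠ 0) :
    -sqNorm (x - μ) / δ + sqNorm x / 2
      = sqNorm μ / (2 - δ) - (2 - δ) / (2 * δ) * sqNorm (x - (2 / (2 - δ)) • μ) := by
  simp only [sqNorm, Finset.sum_div, Finset.mul_sum, neg_div, ← Finset.sum_neg_distrib,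
    ← Finset.sum_add_distrib, ← Finset.sum_sub_distrib]
  refine Finset.sum_congr rfl fun i _ => ?_
  simp only [Pi.sub_apply, Pi.smul_apply, smul_eq_mul]
  field_simp
  ring

lemma gaussDensity_sq_div_stdGaussDensity {m : ℕ} (μ : Fin m → ℝ) {δ : ℝ} (hδ : 0 < δ)
    (h2δ : 2 - δ ≠ 0) (x : Fin m → ℝ) :
    gaussDensity μ δ x ^ 2 / stdGaussDensity m x
      = (2 * π * δ ^ 2) ^ (-(m : ℝ) / 2) * exp (sqNorm μ / (2 - δ))
        * exp (-((2 - δ) / (2 * δ)) * sqNorm (x - (2 / (2 - δ)) • μ)) := by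
  have hconst : ((2 * π * δ) ^ (-(m : ℝ) / 2)) ^ 2 / (2 * π * 1) ^ (-(m : ℝ) / 2)
      = (2 * π * δ ^ 2) ^ (-(m : ℝ) / 2) := by
    rw [rpow_pow_comm (by positivity), ← div_rpow (by positivity) (by positivity)]
    congr 1
    field_simp
  have hexp : exp (-sqNorm (x - μ) / (2 * δ)) ^ 2 / exp (-sqNorm (x - 0) / (2 * 1))
      = exp (sqNorm μ / (2 - δ)) * exp (-((2 - δ) / (2 * δ)) * sqNorm (x - (2 / (2 - δ)) • μ)) := by
    rw [← exp_nat_mul, ← exp_sub, ← exp_add, sub_zero]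
    convert congrArg exp (neg_sqNorm_sub_div_add_sqNorm_div_two μ x hδ.ne' h2δ) using 2 <;> ring
  rw [gaussDensity, stdGaussDensity, gaussDensity, mul_pow, mul_div_mul_comm, hconst, hexp,
    ← mul_assoc]

theorem stmt_9_general (m : ℕ) (δ : ℝ) (hδ0 : 0 < δ) (hδ2 : δ < 2)
    (μ : Fin m → ℝ) :
    ∫ x, (gaussDensity μ δ x)^2 / stdGaussDensity m x
      = (δ * (2 - δ)) ^ (-(m : ℝ)/2) * Real.exp (sqNorm μ / (2 - δ)) := by
  have h2δ : 0 < 2 - δ := by linarith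
  have hconst : (2 * π * δ ^ 2) ^ (-(m : ℝ) / 2) * (π / ((2 - δ) / (2 * δ))) ^ ((m : ℝ) / 2)
      = (δ * (2 - δ)) ^ (-(m : ℝ) / 2) := by
    rw [neg_div, rpow_neg (by positivity), rpow_neg (by positivity), ← inv_rpow (by positivity),
      ← inv_rpow (by positivity), ← mul_rpow (by positivity) (by positivity)]
    congr 1
    field_simp
  simp_rw [gaussDensity_sq_div_stdGaussDensity μ hδ0 h2δ.ne']
  rw [integral_const_mul, integral_exp_neg_mul_sqNorm_sub (by positivity), mul_right_comm, hconst]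

/-- chi-squared divergence between a spherical Gaussian and the standard
Gaussian. For a positive integer `m`, `δ ∈ (0,2)` and `μ ∈ ℝ^m`,
`1 + χ²(N(μ, δ·I_m), N(0, I_m)) = (δ(2 − δ))^(−m/2)·exp(‖μ‖₂²/(2 − δ))`;
here `1 + χ²(P, Q) = ∫ P(x)²/Q(x) dx`. -/
theorem stmt_9 (m : ℕ) (hm : 0 < m) (δ : ℝ) (hδ0 : 0 < δ) (hδ2 : δ < 2)
    (μ : Fin m → ℝ) :
    ∫ x, (gaussDensity μ δ x)^2 / stdGaussDensity m x
      = (δ * (2 - δ)) ^ (-(m : ℝ)/2) * Real.exp (sqNorm μ / (2 - δ)) :=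
  stmt_9_general m δ hδ0 hδ2 μ
end

section
/- There exist absolute constants C > 0 and c' > 0 such that for every c ∈ (0, 1/4) and all positive integers m, d with d > (1/c)^{C/c} and m < d^{c/5}/C, there exists a set S of at least 2^{c'·d^{2c}} matrices in ℝ^{m×d} such that every A ∈ S satisfies A Aᵀ = I_m and every pair of distinct matrices A, A' ∈ S satisfies ‖A' Aᵀ‖_op ≤ C·d^{−1/2+2c}. -/
open Matrix

/-!
Let `n = d / m` and `ε = d ^ (-1/2 + 2c)`. For a sign vector `u ∈ {±1}ⁿ` let `A_u` be the `m × d`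
matrix whose `i`-th row is `u / √n` on the `i`-th block of `n` coordinates. Then
`A_u A_vᵀ = (⟨u, v⟩ / n) I`, so it suffices to find `2 ^ d ^ (2c)` sign vectors with pairwise
`|⟨u, v⟩| ≤ n ε`. By Hoeffding's inequality each `v` is too correlated with at most
`2 ^ (n + 1) exp (-n ε² / 2)` sign vectors, and since `n ε² ≳ d ^ (4c) / m ≫ d ^ (2c)` a greedy
choice produces enough of them.
-/

open Finset Real

section SignVectors

variable {ι : Type*} [Fintype ι]

def signVec (u : ι → Bool) : ι → ℝ := fun i => if u i then 1 else -1

lemma signVec_dotProduct_self (u : ι → Bool) :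
    signVec u ⬝ᵥ signVec u = Fintype.card ι := by
  simp [dotProduct, signVec, apply_ite (fun r : ℝ => r * r)]

variable [DecidableEq ι]

lemma sum_exp_mul_dotProduct_signVec (y : ι → Bool) (l : ℝ) :
    ∑ x : ι → Bool, exp (l * (signVec x ⬝ᵥ signVec y)) = (2 * cosh l) ^ Fintype.card ι := by
  calc ∑ x : ι → Bool, exp (l * (signVec x ⬝ᵥ signVec y))
      = ∑ x : ι → Bool, ∏ i, exp (l * (signVec x i * signVec y i)) := by
        simp only [dotProduct, mul_sum, exp_sum]
    _ = ∏ i, ∑ a : Bool, exp (l * ((if a then 1 else -1) * signVec y i)) :=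
        (Fintype.prod_sum fun i (a : Bool) => exp (l * ((if a then 1 else -1) * signVec y i))).symm
    _ = ∏ _i : ι, 2 * cosh l := by
        refine Finset.prod_congr rfl fun i _ => ?_
        rw [cosh_eq, signVec]
        cases y i <;> simp <;> ring
    _ = (2 * cosh l) ^ Fintype.card ι := Finset.prod_const _

/-- Chernoff's bound: the exponential moment `(2 cosh l) ^ n ≤ 2 ^ n exp (n l² / 2)` at
`l = t / n`, applied to both tails. -/
lemma card_lt_abs_dotProduct_signVec_le (y : ι → Bool) {t : ℝ} (ht : 0 ≤ t) :
    (#{x | t < |signVec x ⬝ᵥ signVec y|} : ℝ)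
      ≤ 2 * 2 ^ Fintype.card ι * exp (-(t ^ 2 / (2 * Fintype.card ι))) := by
  set n := Fintype.card ι
  set l := t / n with hl_def
  have hl : 0 ≤ l := by positivity
  have hmarkov : (#{x | t < |signVec x ⬝ᵥ signVec y|} : ℝ) * exp (l * t)
      ≤ ∑ x : ι → Bool,
          (exp (l * (signVec x ⬝ᵥ signVec y)) + exp (-l * (signVec x ⬝ᵥ signVec y))) := by
    rw [← nsmul_eq_mul]
    refine (card_nsmul_le_sum _ _ _ fun x hx => ?_).trans
      (sum_le_sum_of_subset_of_nonneg (subset_univ _) fun _ _ _ => by positivity)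
    have hx : l * t ≤ l * |signVec x ⬝ᵥ signVec y| :=
      mul_le_mul_of_nonneg_left (mem_filter.mp hx).2.le hl
    rcases abs_cases (signVec x ⬝ᵥ signVec y) with ⟨h, -⟩ | ⟨h, -⟩
    · linarith [exp_le_exp.mpr (h ▸ hx), exp_pos (-l * (signVec x ⬝ᵥ signVec y))]
    · rw [h, mul_neg, ← neg_mul] at hx
      linarith [exp_le_exp.mpr hx, exp_pos (l * (signVec x ⬝ᵥ signVec y))]
  have hcosh : (2 * cosh l) ^ n ≤ 2 ^ n * exp (n * (l ^ 2 / 2)) := by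
    rw [exp_nat_mul, ← mul_pow]
    gcongr
    exact cosh_le_exp_half_sq l
  have hexponent : n * (l ^ 2 / 2) - l * t = -(t ^ 2 / (2 * n)) := by
    rcases eq_or_ne (n : ℝ) 0 with hn | hn
    · simp [hl_def, hn]
    · rw [hl_def]; field_simp; ring
  rw [sum_add_distrib, sum_exp_mul_dotProduct_signVec, sum_exp_mul_dotProduct_signVec,
    cosh_neg] at hmarkov
  rw [← hexponent, exp_sub, ← mul_div_assoc, le_div_iff₀ (exp_pos _)]
  linarith

end SignVectors

/-- Greedy choice: each chosen element excludes at most `β` candidates, so fewer than `N` chosen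
elements never exclude everything. -/
theorem exists_card_eq_pairwise_of_card_filter_not_le {α : Type*} [Fintype α] [DecidableEq α]
    [Nonempty α] {r : α → α → Prop} [DecidableRel r] (hsymm : ∀ x y, r x y → r y x)
    (hirrefl : ∀ x, ¬ r x x) {β : ℝ} (hβ : ∀ y, (#{x | ¬ r x y} : ℝ) ≤ β) :
    ∀ N : ℕ, N * β < Fintype.card α → ∃ T : Finset α, #T = N ∧ (T : Set α).Pairwise r := by
  have hβ_nonneg : 0 ≤ β := (Nat.cast_nonneg _).trans (hβ (Classical.arbitrary α))
  intro N
  induction N with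
  | zero => exact fun _ => ⟨∅, by simp⟩
  | succ N ih =>
    intro hN
    push_cast at hN
    obtain ⟨T, hTcard, hT⟩ := ih (by linarith)
    set U := T.biUnion fun y => ({x | ¬ r x y} : Finset α)
    have hU : (#U : ℝ) < #(univ : Finset α) := calc
      (#U : ℝ) ≤ ∑ y ∈ T, (#{x | ¬ r x y} : ℝ) := mod_cast card_biUnion_le
      _ ≤ N * β := by simpa [hTcard] using sum_le_sum fun y (_ : y ∈ T) => hβ y
      _ < #(univ : Finset α) := by rw [card_univ]; linarith
    obtain ⟨x, -, hxU⟩ := exists_mem_notMem_of_card_lt_card (mod_cast hU : #U < #univ)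
    have hx : ∀ y ∈ T, r x y := fun y hy => by
      by_contra h
      exact hxU (mem_biUnion.mpr ⟨y, hy, by simpa using h⟩)
    have hxT : x ∉ T := fun h => hirrefl x (hx x h)
    refine ⟨insert x T, by rw [card_insert_of_notMem hxT, hTcard], ?_⟩
    rw [coe_insert]
    exact hT.insert_of_notMem hxT fun y hy => ⟨hx y hy, hsymm _ _ (hx y hy)⟩

theorem exists_signVecs_pairwise_abs_dotProduct_le {ι : Type*} [Fintype ι] [DecidableEq ι]
    [Nonempty ι] {ε : ℝ} (hε0 : 0 ≤ ε) (hε1 : ε < 1) {N : ℕ}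
    (hN : 2 * N < exp (Fintype.card ι * ε ^ 2 / 2)) :
    ∃ T : Finset (ι → Bool), #T = N ∧
      (T : Set (ι → Bool)).Pairwise fun u v => |signVec u ⬝ᵥ signVec v| ≤ Fintype.card ι * ε := by
  set n := Fintype.card ι
  have hn : (0 : ℝ) < n := mod_cast Fintype.card_pos
  refine exists_card_eq_pairwise_of_card_filter_not_le (fun u v h => by rwa [dotProduct_comm])
    (fun u => ?_) (β := 2 * 2 ^ n * exp (-((n * ε) ^ 2 / (2 * n)))) (fun v => ?_) N ?_
  · rw [signVec_dotProduct_self, abs_of_pos hn, not_le]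
    exact mul_lt_of_lt_one_right hn hε1
  · simp_rw [not_le]
    exact card_lt_abs_dotProduct_signVec_le v (by positivity)
  · have hexponent : (n * ε) ^ 2 / (2 * n) = n * ε ^ 2 / 2 := by field_simp
    have : 2 * N * exp (-(n * ε ^ 2 / 2)) < 1 := by
      rwa [exp_neg, ← div_eq_mul_inv, div_lt_one (exp_pos _)]
    rw [Fintype.card_fun, Fintype.card_bool, hexponent]
    push_cast
    nlinarith [pow_pos (two_pos (α := ℝ)) n]

section Kronecker

variable {R ι κ ν : Type*} [CommSemiring R]

def oneKroneckerRow [DecidableEq ι] (x : κ → R) : Matrix ι (ι × κ) R :=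
  Matrix.of fun i p => if i = p.1 then x p.2 else 0

lemma oneKroneckerRow_mul_transpose [Fintype ι] [DecidableEq ι] [Fintype κ] (x y : κ → R) :
    (oneKroneckerRow x : Matrix ι (ι × κ) R) * (oneKroneckerRow y : Matrix ι (ι × κ) R)ᵀ =
      (x ⬝ᵥ y) • (1 : Matrix ι ι R) := by
  ext i i'
  simp only [oneKroneckerRow, Matrix.mul_apply, transpose_apply, of_apply, Fintype.sum_prod_type]
  by_cases h : i = i' <;> simp [h, dotProduct]

lemma one_submatrix_mul_transpose [DecidableEq κ] [Fintype ν] [DecidableEq ν] {e : κ → ν}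
    (he : Function.Injective e) :
    (1 : Matrix ν ν R).submatrix e id * ((1 : Matrix ν ν R).submatrix e id)ᵀ = 1 := by
  rw [transpose_submatrix, transpose_one, ← submatrix_mul _ _ _ _ _ Function.bijective_id,
    Matrix.mul_one, submatrix_one _ he]

end Kronecker

lemma opNorm_smul_one_le {m : ℕ} (γ : ℝ) :
    opNorm (γ • (1 : Matrix (Fin m) (Fin m) ℝ)) ≤ |γ| := by
  rw [opNorm, map_smul, map_one, ContinuousLinearMap.one_def, ← Real.norm_eq_abs]
  refine (norm_smul_le γ (ContinuousLinearMap.id ℝ (EuclideanSpace ℝ (Fin m)))).trans ?_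
  exact mul_le_of_le_one_right (norm_nonneg _) ContinuousLinearMap.norm_id_le

/-- Row `i` carries the normalised sign pattern `u / √n` on the `i`-th block of `n` columns;
the last `d - m * n` columns vanish. -/
noncomputable def signBlockMatrix {m n d : ℕ} (hmn : m * n ≤ d) (u : Fin n → Bool) :
    Matrix (Fin m) (Fin d) ℝ :=
  (oneKroneckerRow ((√n)⁻¹ • signVec u) : Matrix (Fin m) (Fin m × Fin n) ℝ) *
    (1 : Matrix (Fin d) (Fin d) ℝ).submatrix (fun p => Fin.castLE hmn (finProdFinEquiv p)) id

lemma signBlockMatrix_mul_transpose {m n d : ℕ} (hmn : m * n ≤ d) (u v : Fin n → Bool) :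
    signBlockMatrix hmn u * (signBlockMatrix hmn v)ᵀ =
      (signVec u ⬝ᵥ signVec v / n) • (1 : Matrix (Fin m) (Fin m) ℝ) := by
  have hP := one_submatrix_mul_transpose (R := ℝ)
    (e := fun p : Fin m × Fin n => Fin.castLE hmn (finProdFinEquiv p))
    ((Fin.castLE_injective hmn).comp finProdFinEquiv.injective)
  rw [signBlockMatrix, signBlockMatrix, transpose_mul, Matrix.mul_assoc,
    ← Matrix.mul_assoc _ _ (oneKroneckerRow _)ᵀ, hP, Matrix.one_mul,
    oneKroneckerRow_mul_transpose, smul_dotProduct, dotProduct_smul, smul_eq_mul, smul_eq_mul,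
    ← mul_assoc, ← mul_inv, mul_self_sqrt (Nat.cast_nonneg _), inv_mul_eq_div]

theorem exists_finset_mul_transpose_eq_one_of_pairwise {m n d : ℕ} (hm : 0 < m) (hn : 0 < n)
    (hmn : m * n ≤ d) {ε : ℝ} (hε : ε < 1) {T : Finset (Fin n → Bool)}
    (hT : (T : Set (Fin n → Bool)).Pairwise fun u v => |signVec u ⬝ᵥ signVec v| ≤ n * ε) :
    ∃ S : Finset (Matrix (Fin m) (Fin d) ℝ), #S = #T ∧ (∀ A ∈ S, A * Aᵀ = 1) ∧
      ∀ A ∈ S, ∀ A' ∈ S, A ≠ A' → opNorm (A' * Aᵀ) ≤ ε := by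
  have hn' : (0 : ℝ) < n := mod_cast hn
  have hself (u : Fin n → Bool) : signBlockMatrix hmn u * (signBlockMatrix hmn u)ᵀ = 1 := by
    rw [signBlockMatrix_mul_transpose, signVec_dotProduct_self, Fintype.card_fin,
      div_self hn'.ne', one_smul]
  have hsmall : ∀ u ∈ T, ∀ v ∈ T, u ≠ v → |signVec u ⬝ᵥ signVec v / n| ≤ ε := by
    intro u hu v hv huv
    rw [abs_div, Nat.abs_cast, div_le_iff₀ hn', mul_comm]
    exact hT hu hv huv
  refine ⟨T.image (signBlockMatrix hmn), card_image_of_injOn fun u hu v hv huv => ?_, ?_, ?_⟩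
  · by_contra hne
    have h := congrFun (congrFun ((signBlockMatrix_mul_transpose hmn u v).symm.trans
      (by rw [huv, hself])) ⟨0, hm⟩) ⟨0, hm⟩
    simp only [Matrix.smul_apply, one_apply_eq, smul_eq_mul, mul_one] at h
    have := hsmall u hu v hv hne
    rw [h, abs_one] at this
    linarith
  · simp only [mem_image]
    rintro _ ⟨u, -, rfl⟩
    exact hself u
  · simp only [mem_image]
    rintro _ ⟨u, hu, rfl⟩ _ ⟨v, hv, rfl⟩ hne
    rw [signBlockMatrix_mul_transpose]
    exact (opNorm_smul_one_le _).trans (hsmall v hv u hu fun h => hne (h ▸ rfl))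

lemma Nat.lt_two_mul_mul_div {m d : ℕ} (hm : 0 < m) (hmd : m ≤ d) : d < 2 * m * (d / m) := by
  have h := Nat.lt_div_mul_add (a := d) hm
  have hq := Nat.div_pos hmd hm
  nlinarith

lemma two_mul_natCeil_two_rpow_lt_exp {X s : ℝ} (hX : 1 ≤ X) (hs : 3 * X ≤ s) :
    2 * (⌈(2 : ℝ) ^ X⌉₊ : ℝ) < exp s := by
  have h2X : 2 ≤ (2 : ℝ) ^ X := by
    simpa using rpow_le_rpow_of_exponent_le one_le_two hX
  have hceil := Nat.ceil_lt_add_one (zero_le_two.trans h2X)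
  calc 2 * (⌈(2 : ℝ) ^ X⌉₊ : ℝ) < 2 ^ X * 2 ^ (2 : ℝ) := by norm_num; linarith
    _ = 2 ^ (X + 2) := (rpow_add two_pos _ _).symm
    _ < exp 1 ^ (X + 2) := by
        gcongr
        exact lt_trans (by norm_num) exp_one_gt_d9
    _ ≤ exp s := by rw [exp_one_rpow]; gcongr; linarith

lemma one_lt_and_lt_rpow_of_inv_rpow_lt {c d : ℝ} (hc : 0 < c) (hc4 : c < 1 / 4)
    (hd : (1 / c) ^ (4 / c) < d) : 1 < d ∧ 256 < d ^ c := by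
  have h4c : 4 < 1 / c := by rw [lt_one_div (by norm_num) hc]; linarith
  have hpow : 1 < (1 / c) ^ (4 / c) := one_lt_rpow (by linarith) (by positivity)
  refine ⟨hpow.trans hd, ?_⟩
  calc (256 : ℝ) = 4 ^ (4 : ℕ) := by norm_num
    _ < (1 / c) ^ (4 : ℕ) := by gcongr
    _ = ((1 / c) ^ (4 / c)) ^ c := by
        rw [← rpow_mul (by positivity), div_mul_cancel₀ _ hc.ne', ← rpow_natCast, Nat.cast_ofNat]
    _ < d ^ c := by gcongr

/-- With `a = d ^ (c / 5)`: `n ε² ≥ d ε² / (2m) = a ^ 20 / (2m) > 2 a ^ 19`, and `a ^ 9 ≥ 3`. -/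
lemma le_and_three_mul_rpow_le {c : ℝ} (hc : 0 < c) (hc4 : c < 1 / 4) {m d : ℕ} (hm : 0 < m)
    (hd : 1 < (d : ℝ)) (hd256 : 256 < (d : ℝ) ^ c) (hmd : (m : ℝ) < d ^ (c / 5) / 4) :
    m ≤ d ∧ 3 * (d : ℝ) ^ (2 * c) ≤ (d / m : ℕ) * ((d : ℝ) ^ (-(1 : ℝ) / 2 + 2 * c)) ^ 2 / 2 := by
  have hd0 : (0 : ℝ) < d := by positivity
  set a := (d : ℝ) ^ (c / 5) with ha
  have hpow {k : ℕ} {r : ℝ} (hr : k * (c / 5) = r) : a ^ k = (d : ℝ) ^ r := by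
    rw [ha, ← rpow_natCast, ← rpow_mul hd0.le, mul_comm, hr]
  have ha5 : a ^ 5 = (d : ℝ) ^ c := hpow (by push_cast; ring)
  have ha10 : a ^ 10 = (d : ℝ) ^ (2 * c) := hpow (by push_cast; ring)
  have ha20 : a ^ 20 = d * ((d : ℝ) ^ (-(1 : ℝ) / 2 + 2 * c)) ^ 2 := by
    rw [hpow (r := 1 + (-(1 : ℝ) / 2 + 2 * c) * 2) (by push_cast; ring), rpow_add hd0, rpow_one,
      rpow_mul hd0.le, rpow_two]
  have ha3 : 3 < a := by
    by_contra! h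
    nlinarith [pow_le_pow_left₀ (by positivity) h 5]
  have had : a ≤ d := by
    simpa using rpow_le_rpow_of_exponent_le hd.le (show c / 5 ≤ 1 by linarith)
  have hmd' : m ≤ d := by exact_mod_cast (show (m : ℝ) ≤ d by linarith)
  refine ⟨hmd', ?_⟩
  have hdn : (d : ℝ) < 2 * m * (d / m : ℕ) := by exact_mod_cast Nat.lt_two_mul_mul_div hm hmd'
  set ε := (d : ℝ) ^ (-(1 : ℝ) / 2 + 2 * c)
  set P := ((d / m : ℕ) : ℝ) * ε ^ 2
  have hP : a ^ 20 < 2 * m * P := calc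
    a ^ 20 = d * ε ^ 2 := ha20
    _ < 2 * m * (d / m : ℕ) * ε ^ 2 := by gcongr
    _ = 2 * m * P := by ring
  have hP0 : 0 < P := by nlinarith [pow_pos (show (0 : ℝ) < a by linarith) 20]
  have h19 : a ^ 19 < P / 2 := by
    refine lt_of_mul_lt_mul_left ?_ (show (0 : ℝ) ≤ a by linarith)
    calc a * a ^ 19 = a ^ 20 := by ring
      _ < 2 * m * P := hP
      _ < a * (P / 2) := by nlinarith
  have h9 : 3 ≤ a ^ 9 := ha3.le.trans (le_self_pow₀ (by linarith) (by norm_num))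
  rw [← ha10]
  nlinarith [pow_pos (show (0 : ℝ) < a by linarith) 10]

/-- Lemma: a large family of pairwise nearly-orthogonal row-orthonormal
matrices. There are absolute constants `C > 0` and `c' > 0` such that for every
`c ∈ (0, 1/4)` and positive integers `m, d` with `d > (1/c)^(C/c)` and `m < d^(c/5)/C`,
there is a set `S` of at least `2^(c'·d^(2c))` matrices in `ℝ^{m×d}` with `A Aᵀ = I_m`
for every `A ∈ S` and `‖A' Aᵀ‖_op ≤ C·d^(−1/2+2c)` for all distinct `A, A' ∈ S`. -/
theorem stmt_14 :
    ∃ C c' : ℝ, 0 < C ∧ 0 < c' ∧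
      ∀ (c : ℝ), 0 < c → c < 1/4 →
      ∀ (m d : ℕ), 0 < m → 0 < d →
        (d : ℝ) > (1/c)^(C/c) → (m : ℝ) < (d : ℝ)^(c/5)/C →
        ∃ S : Finset (Matrix (Fin m) (Fin d) ℝ),
          ((S.card : ℝ) ≥ 2^(c' * (d : ℝ)^(2*c))) ∧
          (∀ A ∈ S, A * Aᵀ = 1) ∧
          (∀ A ∈ S, ∀ A' ∈ S, A ≠ A' →
            opNorm (A' * Aᵀ) ≤ C * (d : ℝ)^(-(1 : ℝ)/2 + 2*c)) := by
  refine ⟨4, 1, by norm_num, one_pos, fun c hc hc4 m d hm _ hd hmd => ?_⟩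
  obtain ⟨hd1, hd256⟩ := one_lt_and_lt_rpow_of_inv_rpow_lt hc hc4 hd
  obtain ⟨hmd', hexponent⟩ := le_and_three_mul_rpow_le hc hc4 hm hd1 hd256 hmd
  set ε := (d : ℝ) ^ (-(1 : ℝ) / 2 + 2 * c)
  have hε0 : 0 < ε := by positivity
  have hε1 : ε < 1 := rpow_lt_one_of_one_lt_of_neg hd1 (by linarith)
  have hn : 0 < d / m := Nat.div_pos hmd' hm
  have : Nonempty (Fin (d / m)) := Fin.pos_iff_nonempty.mp hn
  have hN := two_mul_natCeil_two_rpow_lt_exp (X := (d : ℝ) ^ (2 * c))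
    (one_le_rpow hd1.le (by positivity)) (by simpa using hexponent)
  obtain ⟨T, hTcard, hT⟩ :=
    exists_signVecs_pairwise_abs_dotProduct_le (ι := Fin (d / m)) hε0.le hε1 (by simpa using hN)
  obtain ⟨S, hScard, hSone, hSnorm⟩ := exists_finset_mul_transpose_eq_one_of_pairwise hm hn
    (Nat.mul_div_le d m) hε1 (by simpa using hT)
  refine ⟨S, ?_, hSone, fun A hA A' hA' hne => (hSnorm A hA A' hA' hne).trans (by linarith)⟩
  rw [hScard, hTcard, one_mul]
  exact Nat.le_ceil _
end
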